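/- arXiv:1602.05011 — 2 statements merged into one kernel-verified Lean document; each statement's English description precedes it below -/
import Mathlib

section
/- For every a ∈ ℝ, the graph of the 1-form ω_a(x,y) = (2y/((x−a)²+y²))·dx − (2(x−a)/((x−a)²+y²))·dy is contained in the level set {H = ½} of the magnetic Hamiltonian, i.e. ½·y²·((2y/((x−a)²+y²) − 1/y)² + (2(x−a)/((x−a)²+y²))²) = ½ for all (x,y) with y > 0. -/
/-- The graph of the 1-form `ω_a` is contained in the level set `{H = ½}` of the
magnetic Hamiltonian `H((x,y),(p_x,p_y)) = ½·y²·((p_x − 1/y)² + p_y²)`. -/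
theorem omega_a_graph_in_level_set (a : ℝ) :
    ∀ x y : ℝ, 0 < y →
      (1 / 2) * y ^ 2 * ((2 * y / ((x - a) ^ 2 + y ^ 2) - 1 / y) ^ 2 +
        (2 * (x - a) / ((x - a) ^ 2 + y ^ 2)) ^ 2) = 1 / 2 := by
  intro x y hy
  have hD : (x - a) ^ 2 + y ^ 2 ≠ 0 := by positivity
  field_simp
  ring
end

section
/- For b > 0 and a ∈ ℝ, the curve γ(t) = (a + t/(b(1+t²)), 1/(b(1+t²))) satisfies the magnetic Euler-Lagrange equations: (d/dt)(γ₁'(t)/γ₂(t)² + 1/γ₂(t)) = 0 and (d/dt)(γ₂'(t)/γ₂(t)²) = −(γ₁'(t)² + γ₂'(t)²)/γ₂(t)³ − γ₁'(t)/γ₂(t)² for all t ∈ ℝ. -/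
/-!
Along γ(t) = (a + t / (b(1+t²)), 1 / (b(1+t²))) one computes
γ₁' = (1 - t²) / (b(1+t²)²) and γ₂' = -2t / (b(1+t²)²). Hence the momentum
γ₁'/γ₂² + 1/γ₂ conjugate to x is the constant 2b, and γ₂'/γ₂² = -2bt is linear in t,
with derivative -2b. The second equation then reduces to the identity
(1 - t²)² + (2t)² = (1 + t²)².
-/

section Horocycle

variable {b : ℝ}

lemma hasDerivAt_const_mul_one_add_sq (b t : ℝ) :
    HasDerivAt (fun r : ℝ => b * (1 + r ^ 2)) (2 * b * t) t := by
  simpa [mul_comm, mul_left_comm] using ((hasDerivAt_pow 2 t).const_add 1).const_mul b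

lemma hasDerivAt_horocycle_fst (a : ℝ) (hb : b ≠ 0) (t : ℝ) :
    HasDerivAt (fun r : ℝ => a + r / (b * (1 + r ^ 2)))
      ((1 - t ^ 2) / (b * (1 + t ^ 2) ^ 2)) t := by
  have hq : b * (1 + t ^ 2) ≠ 0 := by positivity
  refine (((hasDerivAt_id' t).div (hasDerivAt_const_mul_one_add_sq b t) hq).const_add a
    ).congr_deriv ?_
  field_simp
  ring

lemma hasDerivAt_horocycle_snd (hb : b ≠ 0) (t : ℝ) :
    HasDerivAt (fun r : ℝ => (1 : ℝ) / (b * (1 + r ^ 2)))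
      (-(2 * t) / (b * (1 + t ^ 2) ^ 2)) t := by
  have hq : b * (1 + t ^ 2) ≠ 0 := by positivity
  refine ((hasDerivAt_const t (1 : ℝ)).div (hasDerivAt_const_mul_one_add_sq b t) hq
    ).congr_deriv ?_
  field_simp
  ring

lemma horocycle_momentum_eq (a : ℝ) (hb : b ≠ 0) (s : ℝ) :
    deriv (fun r => a + r / (b * (1 + r ^ 2))) s / ((1 : ℝ) / (b * (1 + s ^ 2))) ^ 2 +
      1 / ((1 : ℝ) / (b * (1 + s ^ 2))) = 2 * b := by
  have hq : 1 + s ^ 2 ≠ 0 := by positivity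
  rw [(hasDerivAt_horocycle_fst a hb s).deriv]
  field_simp
  ring

lemma horocycle_snd_deriv_div_sq (hb : b ≠ 0) (s : ℝ) :
    deriv (fun r => (1 : ℝ) / (b * (1 + r ^ 2))) s / ((1 : ℝ) / (b * (1 + s ^ 2))) ^ 2 =
      -(2 * b) * s := by
  have hq : 1 + s ^ 2 ≠ 0 := by positivity
  rw [(hasDerivAt_horocycle_snd hb s).deriv]
  field_simp

end Horocycle

/-- The horosphere parametrization satisfies the magnetic Euler-Lagrange
equations. -/
theorem horosphere_satisfies_EL (a b : ℝ) (hb : 0 < b) :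
    ∀ t : ℝ,
      (deriv (fun s =>
        (deriv (fun r => a + r / (b * (1 + r ^ 2))) s) /
          ((1 : ℝ) / (b * (1 + s ^ 2))) ^ 2 +
        1 / ((1 : ℝ) / (b * (1 + s ^ 2)))) t = 0) ∧
      (deriv (fun s =>
        (deriv (fun r => (1 : ℝ) / (b * (1 + r ^ 2))) s) /
          ((1 : ℝ) / (b * (1 + s ^ 2))) ^ 2) t =
        -(((deriv (fun r => a + r / (b * (1 + r ^ 2))) t) ^ 2 +
            (deriv (fun r => (1 : ℝ) / (b * (1 + r ^ 2))) t) ^ 2) /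
          ((1 : ℝ) / (b * (1 + t ^ 2))) ^ 3) -
        (deriv (fun r => a + r / (b * (1 + r ^ 2))) t) /
          ((1 : ℝ) / (b * (1 + t ^ 2))) ^ 2) := by
  intro t
  have hb₀ : b ≠ 0 := hb.ne'
  refine ⟨?_, ?_⟩
  · simp only [horocycle_momentum_eq a hb₀, deriv_const]
  · have hq : 1 + t ^ 2 ≠ 0 := by positivity
    simp only [horocycle_snd_deriv_div_sq hb₀]
    rw [((hasDerivAt_id' t).const_mul (-(2 * b))).deriv,
      (hasDerivAt_horocycle_fst a hb₀ t).deriv, (hasDerivAt_horocycle_snd hb₀ t).deriv]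
    field_simp
    ring
end
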